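/- If T : M₂(ℂ) → M₂(ℂ) is given by T(X) = Σ_{i=1}^k p_i·U_iXU_i† for a probability distribution (p₁, …, p_k) with nonnegative entries summing to 1 and unitaries U₁, …, U_k ∈ U(2), then T is a k-noisy operation, i.e. there exists a unitary U ∈ U(2k), acting on ℂ² ⊗ ℂ^k, such that T(X) = Tr_E(U (X ⊗ (1/k)I_k) U†) for all X ∈ M₂(ℂ). -/

import Mathlib

open Matrix Kronecker BigOperators

open Complex

local notation "M₂" => Matrix (Fin 2) (Fin 2) ℂ
local notation "UG" => Matrix.unitaryGroup (Fin 2) ℂ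


lemma triangle_pair (r₁ r₂ : ℝ) (c : ℂ) (h1 : 0 ≤ r₁) (h2 : 0 ≤ r₂)
    (hlo : |r₁ - r₂| ≤ ‖c‖) (hhi : ‖c‖ ≤ r₁ + r₂) :
    ∃ z₁ z₂ : ℂ, ‖z₁‖ = 1 ∧ ‖z₂‖ = 1 ∧ (r₁ : ℂ) * z₁ + (r₂ : ℂ) * z₂ = c := by
  rcases eq_or_lt_of_le h1 with hr1 | hr1
  · -- r₁ = 0
    have hc : ‖c‖ = r₂ := by
      rw [← hr1] at hlo hhi
      rw [zero_sub, abs_neg, _root_.abs_of_nonneg h2] at hlo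
      rw [zero_add] at hhi
      linarith
    rcases eq_or_lt_of_le h2 with hr2 | hr2
    · exact ⟨1, 1, by simp, by simp, by
        have hcz : c = 0 := by
          have : ‖c‖ = 0 := by rw [hc, ← hr2]
          simpa using this
        simp [hcz, ← hr1, ← hr2]⟩
    · refine ⟨1, c / r₂, by simp, ?_, ?_⟩
      · rw [norm_div, hc, Complex.norm_of_nonneg h2, div_self (ne_of_gt hr2)]
      · have : (r₂ : ℂ) ≠ 0 := by exact_mod_cast ne_of_gt hr2
        field_simp [← hr1]
        simp [← hr1]
  rcases eq_or_lt_of_le h2 with hr2 | hr2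
  · -- r₂ = 0
    have hc : ‖c‖ = r₁ := by
      rw [← hr2] at hlo hhi
      rw [sub_zero, _root_.abs_of_nonneg h1] at hlo
      rw [add_zero] at hhi
      linarith
    refine ⟨c / r₁, 1, ?_, by simp, ?_⟩
    · rw [norm_div, hc, Complex.norm_of_nonneg h1, div_self (ne_of_gt hr1)]
    · have : (r₁ : ℂ) ≠ 0 := by exact_mod_cast ne_of_gt hr1
      field_simp [← hr2]
      simp [← hr2]
  -- both positive
  by_cases hc0 : c = 0
  · subst hc0
    have heq : r₁ = r₂ := by
      simp only [norm_zero] at hlo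
      have := abs_nonneg (r₁ - r₂)
      have h' : |r₁ - r₂| = 0 := le_antisymm hlo this
      have := abs_eq_zero.mp h'
      linarith
    refine ⟨1, -1, by simp, by simp, by rw [heq]; ring⟩
  · set R := ‖c‖ with hR
    have hRpos : 0 < R := norm_pos_iff.mpr hc0
    set a := (R ^ 2 + r₁ ^ 2 - r₂ ^ 2) / (2 * R * r₁) with ha
    have hden : 0 < 2 * R * r₁ := by positivity
    have ha1 : a ≤ 1 := by
      rw [ha, div_le_one hden]
      nlinarith [abs_le.mp hlo, hhi]
    have ha2 : -1 ≤ a := by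
      rw [ha, le_div_iff₀ hden]
      nlinarith [abs_le.mp hlo, hhi]
    set b := Real.sqrt (1 - a ^ 2) with hb
    have hb2 : b ^ 2 = 1 - a ^ 2 := Real.sq_sqrt (by nlinarith)
    set w : ℂ := ⟨a, b⟩ with hw
    have hwabs : ‖w‖ = 1 := by
      rw [Complex.norm_def, Complex.normSq_mk]
      rw [show a * a + b * b = 1 by nlinarith]
      exact Real.sqrt_one
    set u : ℂ := c / R with hu
    have huabs : ‖u‖ = 1 := by
      rw [hu, norm_div, ← hR, Complex.norm_of_nonneg (le_of_lt hRpos), div_self (ne_of_gt hRpos)]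
    refine ⟨u * w, (c - r₁ * (u * w)) / r₂, by rw [norm_mul, huabs, hwabs]; ring, ?_, ?_⟩
    · have hnum : ‖c - r₁ * (u * w)‖ = r₂ := by
        have hRne : (R : ℂ) ≠ 0 := by exact_mod_cast ne_of_gt hRpos
        have hcu : c = u * R := by rw [hu, div_mul_cancel₀ _ hRne]
        have hfac : c - r₁ * (u * w) = u * ((R : ℂ) - r₁ * w) := by rw [hcu]; ring
        rw [hfac, norm_mul, huabs, one_mul]
        have hmk : (R : ℂ) - r₁ * w = ⟨R - r₁ * a, -(r₁ * b)⟩ := by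
          apply Complex.ext <;> simp [hw]
        rw [hmk, Complex.norm_def, Complex.normSq_mk]
        have hval : (R - r₁ * a) * (R - r₁ * a) + -(r₁ * b) * -(r₁ * b) = r₂ ^ 2 := by
          have h2Ra : 2 * R * r₁ * a = R ^ 2 + r₁ ^ 2 - r₂ ^ 2 := by
            rw [ha]; field_simp
          nlinarith
        rw [hval]
        exact Real.sqrt_sq h2
      rw [norm_div, hnum, Complex.norm_of_nonneg h2, div_self (ne_of_gt hr2)]
    · have : (r₂ : ℂ) ≠ 0 := by exact_mod_cast ne_of_gt hr2
      field_simp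
      ring

-- eigenvalue/eigenvector existence for 2x2 complex matrices
lemma exists_eigvec (M : M₂) : ∃ (lam : ℂ) (v : Fin 2 → ℂ), v ≠ 0 ∧ M.mulVec v = lam • v := by
  set t : ℂ := M 0 0 + M 1 1 with ht
  obtain ⟨s, hs⟩ := IsAlgClosed.exists_pow_nat_eq (k := ℂ) (t ^ 2 - 4 * M.det) (n := 2) (by norm_num)
  set lam : ℂ := (t + s) / 2 with hlam
  have hdet : (M - lam • 1).det = 0 := by
    rw [Matrix.det_fin_two]
    have e00 : (M - lam • 1) 0 0 = M 0 0 - lam := by simp [Matrix.one_apply]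
    have e01 : (M - lam • 1) 0 1 = M 0 1 := by simp [Matrix.one_apply]
    have e10 : (M - lam • 1) 1 0 = M 1 0 := by simp [Matrix.one_apply]
    have e11 : (M - lam • 1) 1 1 = M 1 1 - lam := by simp [Matrix.one_apply]
    rw [e00, e01, e10, e11]
    have hdet2 : M.det = M 0 0 * M 1 1 - M 0 1 * M 1 0 := Matrix.det_fin_two M
    rw [hlam, ht]
    rw [ht] at hs
    linear_combination (1/4 : ℂ) * hs - hdet2
  obtain ⟨v, hv0, hveq⟩ := (Matrix.exists_mulVec_eq_zero_iff).mpr hdet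
  refine ⟨lam, v, hv0, ?_⟩
  have := hveq
  rw [Matrix.sub_mulVec, Matrix.smul_mulVec, Matrix.one_mulVec, sub_eq_zero] at this
  exact this


lemma star_ofReal_c (n : ℝ) : star (n : ℂ) = (n : ℂ) := by
  rw [Complex.star_def, Complex.conj_ofReal]

lemma star_mul_self_c (x : ℂ) : star x * x = (Complex.normSq x : ℂ) := by
  rw [Complex.star_def, Complex.normSq_eq_conj_mul_self]

lemma unitary_diag (M : M₂) (hM : M ∈ UG) :
    ∃ P ∈ UG, ∃ d : Fin 2 → ℂ,
      (∀ i, star (d i) * d i = 1) ∧ M = P * Matrix.diagonal d * Pᴴ := by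
  obtain ⟨lam, v, hv0, hMv⟩ := exists_eigvec M
  set n : ℝ := Real.sqrt (Complex.normSq (v 0) + Complex.normSq (v 1)) with hn
  have hvpos : 0 < Complex.normSq (v 0) + Complex.normSq (v 1) := by
    have h0 := Complex.normSq_nonneg (v 0)
    have h1 := Complex.normSq_nonneg (v 1)
    rcases Function.ne_iff.mp hv0 with ⟨i, hi⟩
    fin_cases i
    · have : 0 < Complex.normSq (v 0) := Complex.normSq_pos.mpr (by simpa using hi)
      linarith
    · have : 0 < Complex.normSq (v 1) := Complex.normSq_pos.mpr (by simpa using hi)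
      linarith
  have hnpos : 0 < n := Real.sqrt_pos.mpr hvpos
  have hn2 : n ^ 2 = Complex.normSq (v 0) + Complex.normSq (v 1) := Real.sq_sqrt (le_of_lt hvpos)
  obtain ⟨u, hu⟩ : ∃ u : Fin 2 → ℂ, u = fun i => (n : ℂ)⁻¹ * v i := ⟨_, rfl⟩
  have hnne : (n : ℂ) ≠ 0 := by exact_mod_cast ne_of_gt hnpos
  have hstar : ∀ x : ℂ, star ((n:ℂ)⁻¹ * x) * ((n:ℂ)⁻¹ * x)
      = (n:ℂ)⁻¹ * (n:ℂ)⁻¹ * (star x * x) := by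
    intro x; rw [star_mul', star_inv₀, star_ofReal_c]; ring
  have hunit : star (u 0) * u 0 + star (u 1) * u 1 = 1 := by
    rw [hu]
    rw [hstar, hstar, star_mul_self_c, star_mul_self_c]
    have hsum : ((Complex.normSq (v 0) : ℂ) + (Complex.normSq (v 1) : ℂ)) = (n:ℂ)^2 := by
      rw [← Complex.ofReal_add, ← hn2]; push_cast; ring
    field_simp
    linear_combination hsum
  have hunit' : (starRingEnd ℂ) (u 0) * u 0 + (starRingEnd ℂ) (u 1) * u 1 = 1 := hunit
  have hMu : M.mulVec u = lam • u := by
    funext i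
    have h := congrFun hMv i
    simp only [Matrix.mulVec, dotProduct, Fin.sum_univ_two, Pi.smul_apply,
      smul_eq_mul] at h
    rw [hu]
    simp only [Matrix.mulVec, dotProduct, Fin.sum_univ_two, Pi.smul_apply,
      smul_eq_mul]
    linear_combination (n:ℂ)⁻¹ * h
  obtain ⟨P, hP⟩ : ∃ P : M₂, P = Matrix.of ![![u 0, -star (u 1)], ![u 1, star (u 0)]] := ⟨_, rfl⟩
  have hPHP : Pᴴ * P = 1 := by
    ext i j
    fin_cases i <;> fin_cases j <;>
      simp [hP, Matrix.mul_apply, Fin.sum_univ_two, Matrix.conjTranspose_apply,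
        Matrix.one_apply, Complex.star_def] <;>
      first
        | linear_combination hunit'
        | linear_combination -hunit'
        | ring
  have hPunit : P ∈ UG := (Matrix.mem_unitaryGroup_iff').mpr (by
    rw [Matrix.star_eq_conjTranspose]; exact hPHP)
  have hPPH : P * Pᴴ = 1 := by
    have := Matrix.mem_unitaryGroup_iff.mp hPunit
    rwa [Matrix.star_eq_conjTranspose] at this
  obtain ⟨Q, hQ⟩ : ∃ Q : M₂, Q = Pᴴ * M * P := ⟨_, rfl⟩
  have hPH : Pᴴ ∈ UG := by
    rw [← Matrix.star_eq_conjTranspose]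
    exact Unitary.star_mem hPunit
  have hQunit : Q ∈ UG := by
    rw [hQ]
    exact mul_mem (mul_mem hPH hM) hPunit
  have hQ10 : Q 1 0 = 0 := by
    have hcol : ∀ i, (M * P) i 0 = lam * u i := by
      intro i
      have h := congrFun hMu i
      simp only [Matrix.mulVec, dotProduct, Fin.sum_univ_two, Pi.smul_apply, smul_eq_mul] at h
      simp [hP, Matrix.mul_apply, Fin.sum_univ_two]
      linear_combination h
    have hsplit : Q 1 0 = Pᴴ 1 0 * (M * P) 0 0 + Pᴴ 1 1 * (M * P) 1 0 := by
      rw [hQ, Matrix.mul_assoc]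
      simp [Matrix.mul_apply, Fin.sum_univ_two]
    rw [hsplit, hcol 0, hcol 1]
    simp [hP, Matrix.conjTranspose_apply]
    ring
  have hQQH : Q * Qᴴ = 1 := by
    have := Matrix.mem_unitaryGroup_iff.mp hQunit
    rwa [Matrix.star_eq_conjTranspose] at this
  have hQHQ : Qᴴ * Q = 1 := by
    have := Matrix.mem_unitaryGroup_iff'.mp hQunit
    rwa [Matrix.star_eq_conjTranspose] at this
  have h00 : (starRingEnd ℂ) (Q 0 0) * Q 0 0 = 1 := by
    have h := congrFun (congrFun hQHQ 0) 0
    simp [Matrix.mul_apply, Fin.sum_univ_two, Matrix.conjTranspose_apply, Matrix.one_apply, hQ10] at h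
    linear_combination h
  have hQ01 : Q 0 1 = 0 := by
    have h1 := congrFun (congrFun hQQH 0) 0
    simp [Matrix.mul_apply, Fin.sum_univ_two, Matrix.conjTranspose_apply, Matrix.one_apply] at h1
    have hz : (starRingEnd ℂ) (Q 0 1) * Q 0 1 = 0 := by linear_combination h1 - h00
    rw [← Complex.star_def, star_mul_self_c] at hz
    have : Complex.normSq (Q 0 1) = 0 := by exact_mod_cast hz
    exact Complex.normSq_eq_zero.mp this
  have h11 : (starRingEnd ℂ) (Q 1 1) * Q 1 1 = 1 := by
    have h := congrFun (congrFun hQHQ 1) 1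
    simp [Matrix.mul_apply, Fin.sum_univ_two, Matrix.conjTranspose_apply, Matrix.one_apply, hQ01] at h
    linear_combination h
  refine ⟨P, hPunit, ![Q 0 0, Q 1 1], ?_, ?_⟩
  · intro i; fin_cases i
    · rw [Complex.star_def]; simpa using h00
    · rw [Complex.star_def]; simpa using h11
  · have hQd : Q = Matrix.diagonal ![Q 0 0, Q 1 1] := by
      ext i j
      fin_cases i <;> fin_cases j <;> simp [Matrix.diagonal, hQ10, hQ01]
    rw [← hQd, hQ]
    rw [← Matrix.mul_assoc, ← Matrix.mul_assoc, hPPH, Matrix.one_mul,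
      Matrix.mul_assoc, hPPH, Matrix.mul_one]

lemma diag_unitary (d : Fin 2 → ℂ) (hd : ∀ i, star (d i) * d i = 1) :
    Matrix.diagonal d ∈ UG := by
  rw [Matrix.mem_unitaryGroup_iff', Matrix.star_eq_conjTranspose,
    Matrix.diagonal_conjTranspose, Matrix.diagonal_mul_diagonal]
  have h : (fun i => star (d i) * d i) = fun _ => (1:ℂ) := by
    funext i; exact hd i
  simp only [Pi.mul_apply, Pi.star_apply]
  rw [h]
  exact Matrix.diagonal_one

lemma unimod_of_abs_one {z : ℂ} (hz : ‖z‖ = 1) : star z * z = 1 := by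
  rw [star_mul_self_c]
  have : Complex.normSq z = 1 := by rw [Complex.normSq_eq_norm_sq, hz]; norm_num
  rw [this]; norm_num

lemma two_mix (A B : M₂) (hA : A ∈ UG) (hB : B ∈ UG)
    (s t r₁ r₂ : ℝ) (hs : 0 ≤ s) (ht : 0 ≤ t) (hr₁ : 0 ≤ r₁) (hr₂ : 0 ≤ r₂)
    (hsum : s + t = r₁ + r₂) (hdiff : |r₁ - r₂| ≤ |s - t|) :
    ∃ W₁ ∈ UG, ∃ W₂ ∈ UG, ∀ X : M₂,
      (s:ℂ) • (A * X * Aᴴ) + (t:ℂ) • (B * X * Bᴴ)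
        = (r₁:ℂ) • (W₁ * X * W₁ᴴ) + (r₂:ℂ) • (W₂ * X * W₂ᴴ) := by
  have hBH : Bᴴ ∈ UG := by
    rw [← Matrix.star_eq_conjTranspose]; exact Unitary.star_mem hB
  obtain ⟨P, hP, d, hd, hBA⟩ := unitary_diag (Bᴴ * A) (mul_mem hBH hA)
  have habsd : ∀ i, ‖d i‖ = 1 := by
    intro i
    have h := hd i
    rw [star_mul_self_c] at h
    have : Complex.normSq (d i) = 1 := by exact_mod_cast h
    rw [Complex.norm_def, this, Real.sqrt_one]
  set c : ℂ := (s:ℂ) * (d 0 * star (d 1)) + t with hc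
  have habsw : ‖d 0 * star (d 1)‖ = 1 := by
    rw [norm_mul, habsd 0, Complex.star_def, Complex.norm_conj, habsd 1]; norm_num
  have habs_s : ‖(s:ℂ) * (d 0 * star (d 1))‖ = s := by
    rw [norm_mul, habsw, Complex.norm_of_nonneg hs, mul_one]
  have hhi' : ‖c‖ ≤ s + t := by
    calc ‖c‖ ≤ ‖(s:ℂ) * (d 0 * star (d 1))‖ + ‖(t:ℂ)‖ :=
          norm_add_le _ _
    _ = s + t := by rw [habs_s, Complex.norm_of_nonneg ht]
  have hlo1 : s - t ≤ ‖c‖ := by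
    have : ‖(s:ℂ) * (d 0 * star (d 1))‖ ≤ ‖c‖ + ‖(t:ℂ)‖ := by
      calc ‖(s:ℂ) * (d 0 * star (d 1))‖ = ‖c - t‖ := by rw [hc]; ring_nf
      _ ≤ ‖c‖ + ‖(t:ℂ)‖ := by
          simpa using norm_sub_le c (t:ℂ)
    rw [habs_s, Complex.norm_of_nonneg ht] at this
    linarith
  have hlo2 : t - s ≤ ‖c‖ := by
    have : ‖(t:ℂ)‖ ≤ ‖c‖ + ‖(s:ℂ) * (d 0 * star (d 1))‖ := by
      calc ‖(t:ℂ)‖ = ‖c - (s:ℂ) * (d 0 * star (d 1))‖ := by rw [hc]; ring_nf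
      _ ≤ ‖c‖ + ‖(s:ℂ) * (d 0 * star (d 1))‖ := by
          simpa using norm_sub_le c ((s:ℂ) * (d 0 * star (d 1)))
    rw [habs_s, Complex.norm_of_nonneg ht] at this
    linarith
  have hst_abs : |s - t| ≤ ‖c‖ := abs_le.mpr ⟨by linarith, hlo1⟩
  obtain ⟨z₁, z₂, hz₁, hz₂, hzc⟩ := triangle_pair r₁ r₂ c hr₁ hr₂
    (le_trans hdiff hst_abs) (by rw [← hsum]; exact hhi')
  have hz₁' : star z₁ * z₁ = 1 := unimod_of_abs_one hz₁
  have hz₂' : star z₂ * z₂ = 1 := unimod_of_abs_one hz₂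
  have hzsum : (r₁:ℂ) * z₁ + (r₂:ℂ) * z₂ = (s:ℂ) * (d 0 * star (d 1)) + t := by
    rw [hzc]
  have hzsum' : (r₁:ℂ) * star z₁ + (r₂:ℂ) * star z₂ = (s:ℂ) * (star (d 0) * d 1) + t := by
    have := congrArg star hzsum
    simpa [star_add, star_mul', star_ofReal_c, mul_comm] using this
  have hsumℂ : (s:ℂ) + t = (r₁:ℂ) + r₂ := by exact_mod_cast hsum
  set D₁ : M₂ := Matrix.diagonal ![z₁, 1] with hD₁
  set D₂ : M₂ := Matrix.diagonal ![z₂, 1] with hD₂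
  have hD₁u : D₁ ∈ UG := diag_unitary _ (by
    intro i; fin_cases i
    · simpa using hz₁'
    · simp)
  have hD₂u : D₂ ∈ UG := diag_unitary _ (by
    intro i; fin_cases i
    · simpa using hz₂'
    · simp)
  have core : ∀ Y : M₂,
      (s:ℂ) • (Matrix.diagonal d * Y * (Matrix.diagonal d)ᴴ) + (t:ℂ) • Y
        = (r₁:ℂ) • (D₁ * Y * D₁ᴴ) + (r₂:ℂ) • (D₂ * Y * D₂ᴴ) := by
    intro Y
    ext i j
    fin_cases i <;> fin_cases j <;>
      simp only [hD₁, hD₂, Matrix.diagonal_conjTranspose, Matrix.mul_diagonal,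
        Matrix.diagonal_mul, Matrix.add_apply, Matrix.smul_apply, Pi.star_apply,
        smul_eq_mul, Matrix.cons_val_zero, Matrix.cons_val_one, Matrix.head_cons,
        star_one, Fin.isValue, Fin.zero_eta, Fin.mk_one] <;>
      [ (linear_combination ((s:ℂ) * Y 0 0) * hd 0 - ((r₁:ℂ) * Y 0 0) * hz₁'
          - ((r₂:ℂ) * Y 0 0) * hz₂' + Y 0 0 * hsumℂ);
        (linear_combination (-(Y 0 1)) * hzsum);
        (linear_combination (-(Y 1 0)) * hzsum');
        (linear_combination ((s:ℂ) * Y 1 1) * hd 1 + Y 1 1 * hsumℂ)]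
  -- transport through conjugation
  have hBBH : B * Bᴴ = 1 := by
    have := Matrix.mem_unitaryGroup_iff.mp hB
    rwa [Matrix.star_eq_conjTranspose] at this
  have hPPH : P * Pᴴ = 1 := by
    have := Matrix.mem_unitaryGroup_iff.mp hP
    rwa [Matrix.star_eq_conjTranspose] at this
  have hA' : A = B * P * Matrix.diagonal d * Pᴴ := by
    have h1 : B * (Bᴴ * A) = A := by
      rw [← Matrix.mul_assoc, hBBH, Matrix.one_mul]
    rw [hBA] at h1
    rw [← h1]
    simp only [Matrix.mul_assoc]
  have hP2 : ∀ Z : M₂, P * (Pᴴ * Z) = Z := by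
    intro Z; rw [← Matrix.mul_assoc, hPPH, Matrix.one_mul]
  refine ⟨B * (P * D₁ * Pᴴ), mul_mem hB (mul_mem (mul_mem hP hD₁u)
      (by rw [← Matrix.star_eq_conjTranspose]; exact Unitary.star_mem hP)),
    B * (P * D₂ * Pᴴ), mul_mem hB (mul_mem (mul_mem hP hD₂u)
      (by rw [← Matrix.star_eq_conjTranspose]; exact Unitary.star_mem hP)), ?_⟩
  intro X
  have key := congrArg (fun Z => B * P * Z * (Pᴴ * Bᴴ)) (core (Pᴴ * X * P))
  rw [hA']
  simp only [Matrix.conjTranspose_mul, Matrix.conjTranspose_conjTranspose,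
    Matrix.mul_add, Matrix.add_mul, Matrix.mul_smul, Matrix.smul_mul,
    Matrix.mul_assoc, hP2] at key ⊢
  exact key

lemma flatten : ∀ (k : ℕ) (p : Fin k → ℝ), (∀ i, 0 ≤ p i) → (∑ i, p i) = 1 →
    ∀ (U : Fin k → M₂), (∀ i, U i ∈ UG) →
    ∃ V : Fin k → M₂, (∀ e, V e ∈ UG) ∧
      ∀ X : M₂, ∑ i, (p i : ℂ) • (U i * X * (U i)ᴴ)
        = ∑ e, ((k : ℕ) : ℂ)⁻¹ • (V e * X * (V e)ᴴ) := by
  intro k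
  induction k with
  | zero => intro p _ hp1 _ _; simp at hp1
  | succ m ih =>
    intro p hp0 hp1 U hU
    rcases Nat.eq_zero_or_pos m with hm | hm
    · subst hm
      refine ⟨U, hU, fun X => ?_⟩
      have hp : p 0 = 1 := by simpa using hp1
      simp [Fin.sum_univ_one, hp]
    by_cases huni : ∀ i, p i = ((m+1 : ℕ) : ℝ)⁻¹
    · refine ⟨U, hU, fun X => ?_⟩
      refine Finset.sum_congr rfl fun i _ => ?_
      rw [huni i]
      norm_num
    -- non-uniform case
    obtain ⟨m', rfl⟩ : ∃ m', m = m' + 1 := ⟨m - 1, by omega⟩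
    set μ : ℝ := ((m' + 2 : ℕ) : ℝ)⁻¹ with hμ
    have hμpos : 0 < μ := by rw [hμ]; positivity
    have hsumμ : (m' + 2 : ℝ) * μ = 1 := by
      rw [hμ]; push_cast; field_simp
    obtain ⟨i₀, hi₀⟩ := not_forall.mp huni
    have hex1 : ∃ i, μ < p i := by
      by_contra h
      push_neg at h
      have hlt : p i₀ < μ := lt_of_le_of_ne (h i₀) hi₀
      have hsum : ∑ i, p i < ∑ _i : Fin (m' + 2), μ :=
        Finset.sum_lt_sum (fun i _ => h i) ⟨i₀, Finset.mem_univ _, hlt⟩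
      rw [hp1, Finset.sum_const, Finset.card_univ, Fintype.card_fin, nsmul_eq_mul] at hsum
      push_cast at hsum
      linarith [hsumμ]
    have hex2 : ∃ j, p j < μ := by
      by_contra h
      push_neg at h
      have hlt : μ < p i₀ := lt_of_le_of_ne (h i₀) (Ne.symm hi₀)
      have hsum : ∑ _i : Fin (m' + 2), μ < ∑ i, p i :=
        Finset.sum_lt_sum (fun i _ => h i) ⟨i₀, Finset.mem_univ _, hlt⟩
      rw [hp1, Finset.sum_const, Finset.card_univ, Fintype.card_fin, nsmul_eq_mul] at hsum
      push_cast at hsum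
      linarith [hsumμ]
    obtain ⟨i, hi⟩ := hex1
    obtain ⟨j, hj⟩ := hex2
    have hij : i ≠ j := fun h => by rw [h] at hi; linarith
    have h01 : (0 : Fin (m' + 2)) ≠ 1 := by
      intro h
      have := congrArg Fin.val h
      simp [Fin.val_one] at this
    -- permutation sending 0 ↦ i, 1 ↦ j
    set σ₁ := Equiv.swap (0 : Fin (m' + 2)) i with hσ₁
    set j' := σ₁ j with hj'
    have hj'0 : j' ≠ 0 := by
      intro h
      have h2 : σ₁ j' = σ₁ 0 := by rw [h]
      rw [hj', Equiv.swap_apply_self, Equiv.swap_apply_left] at h2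
      exact hij h2.symm
    set σ₂ := Equiv.swap (1 : Fin (m' + 2)) j' with hσ₂
    set σ := σ₂.trans σ₁ with hσ
    have hσ0 : σ 0 = i := by
      rw [hσ, Equiv.trans_apply, hσ₂, Equiv.swap_apply_of_ne_of_ne h01 hj'0.symm,
        hσ₁, Equiv.swap_apply_left]
    have hσ1 : σ 1 = j := by
      rw [hσ, Equiv.trans_apply, hσ₂, Equiv.swap_apply_left, hj', Equiv.swap_apply_self]
    set q : Fin (m' + 2) → ℝ := fun l => p (σ l) with hqdef
    set Uq : Fin (m' + 2) → M₂ := fun l => U (σ l) with hUqdef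
    have hq0 : ∀ l, 0 ≤ q l := fun l => hp0 _
    have hq1 : ∑ l, q l = 1 := by rw [← hp1]; exact Equiv.sum_comp σ p
    have hqU : ∀ l, Uq l ∈ UG := fun l => hU _
    have hq0μ : μ < q 0 := by rw [hqdef]; simpa [hσ0] using hi
    have hq1μ : q 1 < μ := by rw [hqdef]; simpa [hσ1] using hj
    -- merge q 0 and q 1 into μ and r₂
    set r₂ : ℝ := q 0 + q 1 - μ with hr₂def
    have hr₂0 : 0 ≤ r₂ := by rw [hr₂def]; have := hq0 1; linarith
    obtain ⟨W₁, hW₁u, W₂, hW₂u, hW⟩ := two_mix (Uq 0) (Uq 1) (hqU 0) (hqU 1)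
      (q 0) (q 1) μ r₂ (hq0 0) (hq0 1) (le_of_lt hμpos) hr₂0
      (by rw [hr₂def]; ring)
      (by
        have h1 : |μ - r₂| ≤ q 0 - q 1 := abs_le.mpr ⟨by rw [hr₂def]; linarith, by rw [hr₂def]; linarith⟩
        exact le_trans h1 (le_abs_self _))
    -- reduced problem of size m' + 1
    set cc : ℝ := ((m' + 2 : ℕ) : ℝ) / ((m' + 1 : ℕ) : ℝ) with hcc
    have hccpos : 0 < cc := by rw [hcc]; positivity
    set pr : Fin (m' + 1) → ℝ := Fin.cons (cc * r₂) (fun l => cc * q l.succ.succ) with hpr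
    set Ur : Fin (m' + 1) → M₂ := Fin.cons W₂ (fun l => Uq l.succ.succ) with hUr
    have hpr0 : ∀ l, 0 ≤ pr l := by
      intro l
      refine Fin.cases ?_ ?_ l <;> intros <;> simp only [hpr, Fin.cons_zero, Fin.cons_succ]
      · exact mul_nonneg (le_of_lt hccpos) hr₂0
      · exact mul_nonneg (le_of_lt hccpos) (hq0 _)
    have hqsplit : q 0 + q 1 + ∑ l : Fin m', q l.succ.succ = 1 := by
      rw [← hq1, Fin.sum_univ_succ, Fin.sum_univ_succ]
      simp [Fin.succ_zero_eq_one, add_assoc]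
    have hpr1 : ∑ l, pr l = 1 := by
      rw [Fin.sum_univ_succ]
      simp only [hpr, Fin.cons_zero, Fin.cons_succ]
      rw [← Finset.mul_sum]
      have hq2 : ∑ l : Fin m', q l.succ.succ = 1 - q 0 - q 1 := by linarith
      rw [hq2, hcc, hr₂def, hμ]
      push_cast
      have h1 : (m' : ℝ) + 1 ≠ 0 := by positivity
      have h2 : (m' : ℝ) + 2 ≠ 0 := by positivity
      field_simp
      ring
    have hUru : ∀ l, Ur l ∈ UG := by
      intro l
      refine Fin.cases ?_ ?_ l <;> intros <;> simp [hUr, Fin.cons_zero, Fin.cons_succ]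
      · exact hW₂u
      · exact hqU _
    obtain ⟨Vr, hVru, hVr⟩ := ih pr hpr0 hpr1 Ur hUru
    refine ⟨Fin.cons W₁ Vr, ?_, ?_⟩
    · intro e
      refine Fin.cases ?_ ?_ e <;> intros <;> simp [Fin.cons_zero, Fin.cons_succ]
      · exact hW₁u
      · exact hVru _
    intro X
    set μℂ : ℂ := ((m' + 2 : ℕ) : ℂ)⁻¹ with hμℂ
    have hμcast : ((μ : ℝ) : ℂ) = μℂ := by rw [hμ, hμℂ]; push_cast; ring
    have hcccast : ((cc : ℝ) : ℂ) ≠ 0 := by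
      rw [hcc]; push_cast
      have h1 : (m' : ℂ) + 1 ≠ 0 := by
        intro h
        have := congrArg Complex.re h
        push_cast at this
        simp at this
        linarith [this]
      have h2 : (m' : ℂ) + 2 ≠ 0 := by
        intro h
        have := congrArg Complex.re h
        push_cast at this
        simp at this
        linarith [this]
      exact div_ne_zero h2 h1
    -- LHS
    have step1 : ∑ l, (p l : ℂ) • (U l * X * (U l)ᴴ)
        = ∑ l, (q l : ℂ) • (Uq l * X * (Uq l)ᴴ) :=
      (Equiv.sum_comp σ (fun l => (p l : ℂ) • (U l * X * (U l)ᴴ))).symm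
    have step2 : ∑ l, (q l : ℂ) • (Uq l * X * (Uq l)ᴴ)
        = (q 0 : ℂ) • (Uq 0 * X * (Uq 0)ᴴ) + (q 1 : ℂ) • (Uq 1 * X * (Uq 1)ᴴ)
          + ∑ l : Fin m', (q l.succ.succ : ℂ) • (Uq l.succ.succ * X * (Uq l.succ.succ)ᴴ) := by
      rw [Fin.sum_univ_succ, Fin.sum_univ_succ]
      simp [Fin.succ_zero_eq_one, add_assoc]
    -- from ih
    have hVrX := hVr X
    rw [Fin.sum_univ_succ] at hVrX
    simp only [hpr, hUr, Fin.cons_zero, Fin.cons_succ] at hVrX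
    -- hVrX : (cc*r₂ : ℂ) • (W₂ ..) + ∑ (cc * q l.ss : ℂ) • (Uq l.ss ..) = ∑ ((m'+1:ℕ):ℂ)⁻¹ • Vr e ..
    have hfactor : ((cc * r₂ : ℝ) : ℂ) • (W₂ * X * W₂ᴴ)
          + ∑ l : Fin m', ((cc * q l.succ.succ : ℝ) : ℂ) • (Uq l.succ.succ * X * (Uq l.succ.succ)ᴴ)
        = (cc : ℂ) • ((r₂ : ℂ) • (W₂ * X * W₂ᴴ)
          + ∑ l : Fin m', (q l.succ.succ : ℂ) • (Uq l.succ.succ * X * (Uq l.succ.succ)ᴴ)) := by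
      rw [smul_add, Finset.smul_sum]
      push_cast
      congr 1
      · rw [smul_smul]
      · refine Finset.sum_congr rfl fun l _ => ?_
        rw [smul_smul]
    rw [hfactor] at hVrX
    -- multiply by cc⁻¹
    have hkey : (r₂ : ℂ) • (W₂ * X * W₂ᴴ)
          + ∑ l : Fin m', (q l.succ.succ : ℂ) • (Uq l.succ.succ * X * (Uq l.succ.succ)ᴴ)
        = ∑ e : Fin (m' + 1), μℂ • (Vr e * X * (Vr e)ᴴ) := by
      have h2 := congrArg (fun Z => ((cc:ℝ):ℂ)⁻¹ • Z) hVrX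
      simp only [smul_smul, inv_mul_cancel₀ hcccast, one_smul] at h2
      rw [h2, Finset.smul_sum]
      refine Finset.sum_congr rfl fun e _ => ?_
      rw [smul_smul]
      congr 1
      rw [hμℂ, hcc]
      push_cast
      have h1 : (m' : ℂ) + 1 ≠ 0 := by
        intro h
        have := congrArg Complex.re h
        push_cast at this
        simp at this
        linarith [this]
      have h2' : (m' : ℂ) + 2 ≠ 0 := by
        intro h
        have := congrArg Complex.re h
        push_cast at this
        simp at this
        linarith [this]
      field_simp
    -- assemble
    rw [step1, step2, hW X]
    rw [Fin.sum_univ_succ]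
    simp only [Fin.cons_zero, Fin.cons_succ]
    rw [← hkey]
    rw [hμcast]
    push_cast
    module

/-- Partial trace over the second (environment) tensor factor of `M₂(ℂ) ⊗ M_k(ℂ)`. -/
noncomputable def trE {d k : ℕ} (M : Matrix (Fin d × Fin k) (Fin d × Fin k) ℂ) :
    Matrix (Fin d) (Fin d) ℂ :=
  Matrix.of fun i j => ∑ e : Fin k, M (i, e) (j, e)

/-- a mixed unitary qubit channel `T(X) = Σᵢ₌₁ᵏ pᵢ·UᵢXUᵢ†` is a `k`-noisy
operation: there is a unitary `U` on `ℂ² ⊗ ℂᵏ` with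
`T(X) = Tr_E(U (X ⊗ (1/k)·I_k) U†)` for all `X ∈ M₂(ℂ)`. -/
theorem mixed_unitary_is_k_noisy
    (k : ℕ) (p : Fin k → ℝ)
    (hp0 : ∀ i, 0 ≤ p i) (hp1 : ∑ i, p i = 1)
    (U : Fin k → Matrix (Fin 2) (Fin 2) ℂ)
    (hU : ∀ i, U i ∈ Matrix.unitaryGroup (Fin 2) ℂ) :
    ∃ W : Matrix (Fin 2 × Fin k) (Fin 2 × Fin k) ℂ,
      W ∈ Matrix.unitaryGroup (Fin 2 × Fin k) ℂ ∧
      ∀ X : Matrix (Fin 2) (Fin 2) ℂ,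
        ∑ i, (p i : ℂ) • (U i * X * (U i)ᴴ) =
          trE (W * (X ⊗ₖ ((k : ℂ)⁻¹ • (1 : Matrix (Fin k) (Fin k) ℂ))) * Wᴴ) := by
  obtain ⟨V, hVu, hV⟩ := flatten k p hp0 hp1 U hU
  refine ⟨Matrix.blockDiagonal (fun e : Fin k => V e), ?_, ?_⟩
  · rw [Matrix.mem_unitaryGroup_iff, Matrix.star_eq_conjTranspose,
      Matrix.blockDiagonal_conjTranspose, ← Matrix.blockDiagonal_mul]
    rw [show (fun e : Fin k => V e * (V e)ᴴ) = fun _ => (1 : Matrix (Fin 2) (Fin 2) ℂ) from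
      funext fun e => by
        have := Matrix.mem_unitaryGroup_iff.mp (hVu e)
        rwa [Matrix.star_eq_conjTranspose] at this]
    exact Matrix.blockDiagonal_one
  intro X
  have hkron : X ⊗ₖ ((k : ℂ)⁻¹ • (1 : Matrix (Fin k) (Fin k) ℂ))
      = Matrix.blockDiagonal (fun _ : Fin k => (k : ℂ)⁻¹ • X) := by
    ext ⟨i, e⟩ ⟨j, f⟩
    by_cases hef : e = f
    · subst hef
      simp [Matrix.kroneckerMap_apply, Matrix.blockDiagonal_apply_eq, Matrix.one_apply,
        Matrix.smul_apply]
      ring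
    · simp [Matrix.kroneckerMap_apply, Matrix.blockDiagonal_apply_ne _ _ _ hef,
        Matrix.one_apply, hef, Matrix.smul_apply]
  rw [hkron, Matrix.blockDiagonal_conjTranspose, ← Matrix.blockDiagonal_mul,
    ← Matrix.blockDiagonal_mul]
  have htr : trE (Matrix.blockDiagonal (fun e : Fin k => V e * ((k : ℂ)⁻¹ • X) * (V e)ᴴ))
      = ∑ e : Fin k, V e * ((k : ℂ)⁻¹ • X) * (V e)ᴴ := by
    ext i j
    simp [trE, Matrix.blockDiagonal_apply_eq, Matrix.sum_apply]
  rw [htr, hV X]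
  refine Finset.sum_congr rfl fun e _ => ?_
  rw [Matrix.mul_smul, Matrix.smul_mul]
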